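/- arXiv:2603.14004 — 2 statements merged into one kernel-verified Lean document; each statement's English description precedes it below -/
import Mathlib

section
/- Let Z ∈ ℝ^{m×n}, P ∈ ℝ^{k×n}, F ∈ ℝ^{m×k}, S ∈ ℝ^{m×k}, and real numbers α, λ. Define M = Z Pᵀ + α F − λ S and the constant C = ‖Z‖_F² + ‖P‖_F² + α‖F‖_F² − λ‖S‖_F² + (α − λ)·k − ‖M‖_F² − k. Then for every W ∈ ℝ^{m×k} with WᵀW = I_k, the identity ‖Z − W P‖_F² + α‖W − F‖_F² − λ‖W − S‖_F² = ‖W − M‖_F² + C holds; in particular the difference between the objective J(W) = ‖Z − W P‖_F² + α‖W − F‖_F² − λ‖W − S‖_F² and ‖W − M‖_F² is independent of W on the set {W : WᵀW = I_k}. -/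
open Matrix BigOperators

/-- Squared Frobenius norm of a real matrix. -/
noncomputable def frobSq {m k : Type*} [Fintype m] [Fintype k]
    (A : Matrix m k ℝ) : ℝ := ∑ i, ∑ j, (A i j) ^ 2

noncomputable def ip {m k : Type*} [Fintype m] [Fintype k]
    (A B : Matrix m k ℝ) : ℝ := ∑ i, ∑ j, A i j * B i j

lemma frobSq_sub {m k : Type*} [Fintype m] [Fintype k] (A B : Matrix m k ℝ) :
    frobSq (A - B) = frobSq A - 2 * ip A B + frobSq B := by
  simp only [frobSq, ip, Matrix.sub_apply, ← Finset.sum_add_distrib,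
    ← Finset.sum_sub_distrib, Finset.mul_sum]
  refine Finset.sum_congr rfl fun i _ => ?_
  exact Finset.sum_congr rfl fun j _ => by ring

lemma frobSq_eq_trace {m k : Type*} [Fintype m] [Fintype k]
    [DecidableEq m] [DecidableEq k] (A : Matrix m k ℝ) :
    frobSq A = Matrix.trace (Aᵀ * A) := by
  simp [frobSq, Matrix.trace, Matrix.diag, Matrix.mul_apply, sq]
  rw [Finset.sum_comm]

lemma frobSq_W {m k : Type*} [Fintype m] [Fintype k]
    [DecidableEq m] [DecidableEq k] (W : Matrix m k ℝ) (h : Wᵀ * W = 1) :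
    frobSq W = (Fintype.card k : ℝ) := by
  rw [frobSq_eq_trace, h, Matrix.trace_one]

lemma frobSq_mul {m n k : Type*} [Fintype m] [Fintype n] [Fintype k]
    [DecidableEq m] [DecidableEq n] [DecidableEq k]
    (W : Matrix m k ℝ) (P : Matrix k n ℝ) (h : Wᵀ * W = 1) :
    frobSq (W * P) = frobSq P := by
  rw [frobSq_eq_trace, frobSq_eq_trace, Matrix.transpose_mul, Matrix.mul_assoc,
    ← Matrix.mul_assoc Wᵀ W P, h, Matrix.one_mul]

lemma ip_mul {m n k : Type*} [Fintype m] [Fintype n] [Fintype k]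
    (Z : Matrix m n ℝ) (W : Matrix m k ℝ) (P : Matrix k n ℝ) :
    ip Z (W * P) = ip W (Z * Pᵀ) := by
  simp only [ip, Matrix.mul_apply, Matrix.transpose_apply, Finset.mul_sum]
  refine Finset.sum_congr rfl fun i _ => ?_
  rw [Finset.sum_comm]
  exact Finset.sum_congr rfl fun l _ => Finset.sum_congr rfl fun j _ => by ring

lemma ip_add_right {m k : Type*} [Fintype m] [Fintype k] (A B C : Matrix m k ℝ) :
    ip A (B + C) = ip A B + ip A C := by
  simp [ip, mul_add, Finset.sum_add_distrib]

lemma ip_sub_right {m k : Type*} [Fintype m] [Fintype k] (A B C : Matrix m k ℝ) :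
    ip A (B - C) = ip A B - ip A C := by
  simp [ip, mul_sub, Finset.sum_sub_distrib]

lemma ip_smul_right {m k : Type*} [Fintype m] [Fintype k] (c : ℝ) (A B : Matrix m k ℝ) :
    ip A (c • B) = c * ip A B := by
  simp [ip, Finset.mul_sum, mul_left_comm]

/-- With `M = Z Pᵀ + α F − λ S` and the constant
`C = ‖Z‖_F² + ‖P‖_F² + α‖F‖_F² − λ‖S‖_F² + (α − λ)k − ‖M‖_F² − k`,
the U-Face objective satisfies, for every `W` with orthonormal columns,
`‖Z − W P‖_F² + α‖W − F‖_F² − λ‖W − S‖_F² = ‖W − M‖_F² + C`. -/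
theorem objective_eq_procrustes_plus_const (m n k : ℕ)
    (Z : Matrix (Fin m) (Fin n) ℝ) (P : Matrix (Fin k) (Fin n) ℝ)
    (F S : Matrix (Fin m) (Fin k) ℝ) (α lam : ℝ) :
    ∀ W : Matrix (Fin m) (Fin k) ℝ, Wᵀ * W = 1 →
      frobSq (Z - W * P) + α * frobSq (W - F) - lam * frobSq (W - S) =
        frobSq (W - (Z * Pᵀ + α • F - lam • S)) +
          (frobSq Z + frobSq P + α * frobSq F - lam * frobSq S +
            (α - lam) * (k : ℝ) - frobSq (Z * Pᵀ + α • F - lam • S) - (k : ℝ)) := by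
  intro W hW
  have hk : frobSq W = (k : ℝ) := by
    rw [frobSq_W W hW, Fintype.card_fin]
  rw [frobSq_sub Z (W * P), frobSq_sub W F, frobSq_sub W S,
    frobSq_sub W (Z * Pᵀ + α • F - lam • S), frobSq_mul W P hW, ip_mul,
    ip_sub_right, ip_add_right, ip_smul_right, ip_smul_right, hk]
  ring
end

section
/- Let Z ∈ ℝ^{m×n}, S ∈ ℝ^{m×k}, α > 0, λ ≥ 0, and define J(W, P, F) = ‖Z − W P‖_F² + α‖W − F‖_F² − λ‖W − S‖_F². Let (Wᵗ, Pᵗ, Fᵗ), t = 1, 2, 3, …, be sequences such that for every t: (Wᵗ)ᵀWᵗ = I_k, Fᵗ is entrywise nonnegative, and the exact block updates hold, i.e., J(Wᵗ⁺¹, Pᵗ, Fᵗ) ≤ J(W, Pᵗ, Fᵗ) for all W with WᵀW = I_k, J(Wᵗ⁺¹, Pᵗ⁺¹, Fᵗ) ≤ J(Wᵗ⁺¹, P, Fᵗ) for all P, and J(Wᵗ⁺¹, Pᵗ⁺¹, Fᵗ⁺¹) ≤ J(Wᵗ⁺¹, Pᵗ⁺¹, F) for all entrywise nonnegative F. Then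 the sequence of objective values t ↦ J(Wᵗ, Pᵗ, Fᵗ) is non-increasing, bounded below by −λ·(√k + ‖S‖_F)², and converges to a finite limit as t → ∞. -/
open Matrix BigOperators Filter

/-- Frobenius norm of a real matrix. -/
noncomputable def frobNorm {m k : Type*} [Fintype m] [Fintype k]
    (A : Matrix m k ℝ) : ℝ := Real.sqrt (frobSq A)

/-- The U-Face objective `J(W,P,F) = ‖Z − WP‖_F² + α‖W − F‖_F² − λ‖W − S‖_F²`. -/
noncomputable def J {m n k : ℕ} (Z : Matrix (Fin m) (Fin n) ℝ)
    (S : Matrix (Fin m) (Fin k) ℝ) (α lam : ℝ)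
    (W : Matrix (Fin m) (Fin k) ℝ) (P : Matrix (Fin k) (Fin n) ℝ)
    (F : Matrix (Fin m) (Fin k) ℝ) : ℝ :=
  frobSq (Z - W * P) + α * frobSq (W - F) - lam * frobSq (W - S)

lemma frobSq_nonneg {m k : Type*} [Fintype m] [Fintype k] (A : Matrix m k ℝ) :
    0 ≤ frobSq A :=
  Finset.sum_nonneg fun _ _ => Finset.sum_nonneg fun _ _ => sq_nonneg _

lemma frobNorm_nonneg {m k : Type*} [Fintype m] [Fintype k] (A : Matrix m k ℝ) :
    0 ≤ frobNorm A := Real.sqrt_nonneg _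

lemma frobSq_eq_prod {m k : Type*} [Fintype m] [Fintype k] (A : Matrix m k ℝ) :
    frobSq A = ∑ p : m × k, (A p.1 p.2) ^ 2 := by
  rw [frobSq, Fintype.sum_prod_type]

lemma cross_le {m k : Type*} [Fintype m] [Fintype k] (A B : Matrix m k ℝ) :
    ∑ p : m × k, A p.1 p.2 * B p.1 p.2 ≤ frobNorm A * frobNorm B := by
  have h := Real.sum_mul_le_sqrt_mul_sqrt Finset.univ
    (fun p : m × k => A p.1 p.2) (fun p : m × k => B p.1 p.2)
  simpa [frobNorm, frobSq_eq_prod] using h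

lemma frobSq_add_le {m k : Type*} [Fintype m] [Fintype k] (A B : Matrix m k ℝ) :
    frobSq (A + B) ≤ (frobNorm A + frobNorm B) ^ 2 := by
  have hA : frobNorm A ^ 2 = frobSq A := Real.sq_sqrt (frobSq_nonneg A)
  have hB : frobNorm B ^ 2 = frobSq B := Real.sq_sqrt (frobSq_nonneg B)
  have hc := cross_le A B
  have : frobSq (A + B) = frobSq A + 2 * (∑ p : m × k, A p.1 p.2 * B p.1 p.2) + frobSq B := by
    simp only [frobSq_eq_prod, Matrix.add_apply, Finset.mul_sum,
      ← Finset.sum_add_distrib]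
    apply Finset.sum_congr rfl
    intro p _
    ring
  nlinarith [frobSq_nonneg (A+B)]

lemma frobSq_neg {m k : Type*} [Fintype m] [Fintype k] (A : Matrix m k ℝ) :
    frobSq (-A) = frobSq A := by
  simp [frobSq]

lemma frobSq_orth {m k : ℕ} (W : Matrix (Fin m) (Fin k) ℝ)
    (hW : Wᵀ * W = 1) : frobSq W = k := by
  have h : ∀ j, (Wᵀ * W) j j = ∑ i, (W i j) ^ 2 := by
    intro j
    simp [Matrix.mul_apply, Matrix.transpose_apply, sq]
  have := congrArg (fun M : Matrix (Fin k) (Fin k) ℝ => ∑ j, M j j) hW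
  simp only [h] at this
  rw [frobSq, Finset.sum_comm, this]
  simp [Matrix.one_apply]

/-- Convergence of the AIDC objective values: under exact block updates, the
sequence `t ↦ J(Wᵗ, Pᵗ, Fᵗ)` is non-increasing, bounded below by
`−λ(√k + ‖S‖_F)²`, and converges to a finite limit. -/
theorem aidc_objective_converges (m n k : ℕ)
    (Z : Matrix (Fin m) (Fin n) ℝ) (S : Matrix (Fin m) (Fin k) ℝ)
    (α lam : ℝ) (hα : 0 < α) (hlam : 0 ≤ lam)
    (W : ℕ → Matrix (Fin m) (Fin k) ℝ)
    (P : ℕ → Matrix (Fin k) (Fin n) ℝ)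
    (F : ℕ → Matrix (Fin m) (Fin k) ℝ)
    (hW : ∀ t, (W t)ᵀ * (W t) = 1)
    (hF : ∀ t i j, 0 ≤ F t i j)
    (hWupd : ∀ t, ∀ W' : Matrix (Fin m) (Fin k) ℝ, W'ᵀ * W' = 1 →
      J Z S α lam (W (t + 1)) (P t) (F t) ≤ J Z S α lam W' (P t) (F t))
    (hPupd : ∀ t, ∀ P' : Matrix (Fin k) (Fin n) ℝ,
      J Z S α lam (W (t + 1)) (P (t + 1)) (F t) ≤ J Z S α lam (W (t + 1)) P' (F t))
    (hFupd : ∀ t, ∀ F' : Matrix (Fin m) (Fin k) ℝ, (∀ i j, 0 ≤ F' i j) →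
      J Z S α lam (W (t + 1)) (P (t + 1)) (F (t + 1)) ≤
        J Z S α lam (W (t + 1)) (P (t + 1)) F') :
    (∀ t, J Z S α lam (W (t + 1)) (P (t + 1)) (F (t + 1)) ≤
        J Z S α lam (W t) (P t) (F t)) ∧
    (∀ t, -lam * (Real.sqrt (k : ℝ) + frobNorm S) ^ 2 ≤
        J Z S α lam (W t) (P t) (F t)) ∧
    (∃ L : ℝ, Tendsto (fun t => J Z S α lam (W t) (P t) (F t)) atTop (nhds L)) := by
  have hmono : ∀ t, J Z S α lam (W (t + 1)) (P (t + 1)) (F (t + 1)) ≤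
      J Z S α lam (W t) (P t) (F t) := by
    intro t
    calc J Z S α lam (W (t + 1)) (P (t + 1)) (F (t + 1))
        ≤ J Z S α lam (W (t + 1)) (P (t + 1)) (F t) := hFupd t (F t) (hF t)
      _ ≤ J Z S α lam (W (t + 1)) (P t) (F t) := hPupd t (P t)
      _ ≤ J Z S α lam (W t) (P t) (F t) := hWupd t (W t) (hW t)
  have hbd : ∀ t, -lam * (Real.sqrt (k : ℝ) + frobNorm S) ^ 2 ≤
      J Z S α lam (W t) (P t) (F t) := by
    intro t
    have h1 : frobSq (W t - S) ≤ (Real.sqrt (k : ℝ) + frobNorm S) ^ 2 := by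
      have h2 : W t - S = W t + (-S) := sub_eq_add_neg _ _
      rw [h2]
      have h3 := frobSq_add_le (W t) (-S)
      have h4 : frobNorm (W t) = Real.sqrt (k : ℝ) := by
        rw [frobNorm, frobSq_orth (W t) (hW t)]
      have h5 : frobNorm (-S) = frobNorm S := by rw [frobNorm, frobSq_neg, frobNorm]
      rwa [h4, h5] at h3
    have h6 : 0 ≤ frobSq (Z - W t * P t) := frobSq_nonneg _
    have h7 : 0 ≤ frobSq (W t - F t) := frobSq_nonneg _
    unfold _root_.J
    nlinarith
  refine ⟨hmono, hbd, ?_⟩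
  have hant : Antitone (fun t => J Z S α lam (W t) (P t) (F t)) :=
    antitone_nat_of_succ_le hmono
  have hbb : BddBelow (Set.range (fun t => J Z S α lam (W t) (P t) (F t))) := by
    refine ⟨-lam * (Real.sqrt (k : ℝ) + frobNorm S) ^ 2, ?_⟩
    rintro x ⟨t, rfl⟩
    exact hbd t
  exact ⟨_, tendsto_atTop_ciInf hant hbb⟩
end
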